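/- Action of H on √α·Q (Lemma 1.1(4)): For all x ∈ ℝ, H(√α·Q)(x) = −((1+b)/b)·√(α(x))·Q(x)^{1/b+2} = −((1+b)/b)·√(α(x))·α(x)^{−1}; equivalently, 𝓛Q is the constant function with value −(1+b)/b. -/

import Mathlib

open Real MeasureTheory Filter

noncomputable section

/-- `ν = -(b+1)/2`. -/
def nuP (b : ℝ) : ℝ := -(b + 1) / 2

/-- The lefton momentum profile `Q(x) = (A(1-b)/2) (cosh(νx))^{b/ν}`. -/
def Qp (b A : ℝ) (x : ℝ) : ℝ :=
  A * (1 - b) / 2 * Real.cosh (nuP b * x) ^ (b / nuP b)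

/-- The lefton velocity profile `q(x) = A (cosh(νx))^{-1/ν}`. -/
def qp (b A : ℝ) (x : ℝ) : ℝ := A * Real.cosh (nuP b * x) ^ (-1 / nuP b)

/-- `k = (A(1-b)/2)^{1/b+1}`. -/
def kP (b A : ℝ) : ℝ := (A * (1 - b) / 2) ^ (1 / b + 1)

/-- The weight `α(x) = Q(x)^{-1/b-2}`. -/
def alphaP (b A : ℝ) (x : ℝ) : ℝ := Qp b A x ^ (-1 / b - 2)

/-- `SQ(x) = (2k(1-b)/b) Q^{-1/b} + (2(b-1)/b) Q`. -/
def SQp (b A : ℝ) (x : ℝ) : ℝ :=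
  2 * kP b A * (1 - b) / b * Qp b A x ^ (-1 / b) + 2 * (b - 1) / b * Qp b A x

/-- The Pöschl–Teller potential `H̃₀(x) = 1/4 - (b(1+2b)/4) sech²(νx)`. -/
def Htilde0 (b : ℝ) (x : ℝ) : ℝ :=
  1 / 4 - b * (1 + 2 * b) / 4 * (1 / Real.cosh (nuP b * x)) ^ 2

/-- The Schrödinger operator `(Hg)(x) = (2k/b²)(−g'' + H̃₀ g)`. -/
def Hop (b A : ℝ) (g : ℝ → ℝ) (x : ℝ) : ℝ :=
  2 * kP b A / b ^ 2 * (-(deriv (deriv g) x) + Htilde0 b x * g x)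

/-- The linearized operator `(𝓛f)(x) = k(−((2α/b²) f')' − (2(b+1)/b) α f)`. -/
def Lop (b A : ℝ) (f : ℝ → ℝ) (x : ℝ) : ℝ :=
  kP b A * (-(deriv (fun y => 2 * alphaP b A y / b ^ 2 * deriv f y) x)
    - 2 * (b + 1) / b * alphaP b A x * f x)

/-- The integrand of the conserved functional `F₂`. -/
def F2Integrand (b : ℝ) (f : ℝ → ℝ) (x : ℝ) : ℝ :=
  f x ^ (-1 / b) * ((deriv f x) ^ 2 / (b ^ 2 * f x ^ 2) + 1)

/-- The squared weighted norm `‖f‖²_{H¹_α} = ∫ (f² + f'²) α`. -/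
def HalphaSq (b A : ℝ) (f : ℝ → ℝ) : ℝ :=
  ∫ x, (f x ^ 2 + deriv f x ^ 2) * alphaP b A x

/-- The `𝒵`-norm `‖f‖_𝒵 = ‖f‖_{H¹_α} + sup_x |f(x)|/Q(x)`. -/
def ZNorm (b A : ℝ) (f : ℝ → ℝ) : ℝ :=
  Real.sqrt (HalphaSq b A f) + ⨆ x : ℝ, |f x| / Qp b A x

/-- `m : ℝ → ℝ → ℝ` (time then space) solves the b-family equation in momentum form,
with velocity `u` satisfying `m = u - u_xx` and `m_t + u m_x + b u_x m = 0`. -/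
def IsBFamilySolution (b : ℝ) (m u : ℝ → ℝ → ℝ) : Prop :=
  (∀ t x, m t x = u t x - deriv (deriv (u t)) x) ∧
  ∀ t x, deriv (fun s => m s x) t + u t x * deriv (m t) x + b * deriv (u t) x * m t x = 0

/-- `(v, h)` solves the linearization of the b-family equation around the lefton:
`h - h_xx = v` and `v_t = ∂_x(q h_xx + (b-1) q' h_x - (b+1) q h + q'' h)`. -/
def IsLinearizedSolution (b A : ℝ) (v h : ℝ → ℝ → ℝ) : Prop :=
  (∀ t x, h t x - deriv (deriv (h t)) x = v t x) ∧
  ∀ t x, deriv (fun s => v s x) t =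
    deriv (fun y => qp b A y * deriv (deriv (h t)) y
      + (b - 1) * deriv (qp b A) y * deriv (h t) y
      - (b + 1) * qp b A y * h t y + deriv (deriv (qp b A)) y * h t y) x

/-- The quadratic form `(𝓛η, η) = (2k/b²)∫ η'² α − (2k(b+1)/b)∫ η² α`. -/
def quadFormL (b A : ℝ) (η : ℝ → ℝ) : ℝ :=
  2 * kP b A / b ^ 2 * (∫ x, deriv η x ^ 2 * alphaP b A x)
    - 2 * kP b A * (b + 1) / b * (∫ x, η x ^ 2 * alphaP b A x)

/-- The monotonicity weight `ψ_L(x) = (2/π) arctan(exp(νx/L))` with `L = 3 - b`. -/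
def psiL (b : ℝ) (x : ℝ) : ℝ :=
  2 / Real.pi * Real.arctan (Real.exp (nuP b * x / (3 - b)))

/-! The substitution `c = cosh (ν x)` turns every quantity into a power of `c`: with
`C = A(1-b)/2` one has `Q = C c^{b/ν}`, `√α Q = Q^{-1/(2b)} ∝ c^{-1/(2ν)}` and `α Q ∝ c²`.
For `p = -1/(2ν)` we have `pν = -1/2`, so the `c^p` terms of `-(c^p)''` and of `H̃₀ c^p` cancel,
leaving a multiple of `c^{p-2}`, which is `√α Q^{1/b+2}` up to a constant. For `𝓛`, the flux
`(2α/b²) Q'` is a multiple of `sinh (2νx)`, whose derivative `∝ 2c² - 1` combines with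
`α Q ∝ c²` into a constant. -/

lemma nuP_ne_zero {b : ℝ} (hb : b ≠ -1) : nuP b ≠ 0 := by
  unfold nuP
  intro h
  exact hb (by linarith)

lemma hasDerivAt_cosh_mul_rpow (ν p x : ℝ) :
    HasDerivAt (fun y => cosh (ν * y) ^ p) (p * ν * cosh (ν * x) ^ (p - 1) * sinh (ν * x)) x := by
  have h := ((hasDerivAt_id x).const_mul ν).cosh.rpow_const (p := p) (Or.inl (cosh_pos _).ne')
  simp only [mul_one, id] at h
  exact h.congr_deriv (by ring)

lemma deriv_deriv_cosh_mul_rpow (ν p x : ℝ) :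
    deriv (deriv fun y => cosh (ν * y) ^ p) x
      = p * ν ^ 2 * (p * cosh (ν * x) ^ p - (p - 1) * cosh (ν * x) ^ (p - 2)) := by
  have hderiv : deriv (fun y => cosh (ν * y) ^ p)
      = fun y => p * ν * (cosh (ν * y) ^ (p - 1) * sinh (ν * y)) := by
    funext y
    rw [(hasDerivAt_cosh_mul_rpow ν p y).deriv]
    ring
  have hsinh : HasDerivAt (fun y => sinh (ν * y)) (cosh (ν * x) * ν) x := by
    simpa using ((hasDerivAt_id x).const_mul ν).sinh
  have h : HasDerivAt (fun y => p * ν * (cosh (ν * y) ^ (p - 1) * sinh (ν * y))) _ x :=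
    ((hasDerivAt_cosh_mul_rpow ν (p - 1) x).mul hsinh).const_mul (p * ν)
  rw [hderiv, h.deriv]
  have hc : cosh (ν * x) ≠ 0 := (cosh_pos _).ne'
  have hsq : sinh (ν * x) ^ 2 = cosh (ν * x) ^ 2 - 1 := by
    linear_combination -(cosh_sq_sub_sinh_sq (ν * x))
  rw [show p - 1 - 1 = p - 2 by ring, show p - 2 = p - 1 - 1 by ring,
    rpow_sub_one hc, rpow_sub_one hc]
  field_simp
  linear_combination p * ν ^ 2 * (p - 1) * hsq

lemma neg_deriv_deriv_add_Htilde0_mul_cosh_rpow {b : ℝ} (hb : b ≠ -1) (x : ℝ) :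
    -deriv (deriv fun y => cosh (nuP b * y) ^ (-1 / (2 * nuP b))) x
        + Htilde0 b x * cosh (nuP b * x) ^ (-1 / (2 * nuP b))
      = -(b * (1 + b) / 2) * cosh (nuP b * x) ^ (-1 / (2 * nuP b) - 2) := by
  have hν := nuP_ne_zero hb
  have hc : cosh (nuP b * x) ≠ 0 := (cosh_pos _).ne'
  have hpow : cosh (nuP b * x) ^ (-1 / (2 * nuP b))
      = cosh (nuP b * x) ^ (-1 / (2 * nuP b) - 2) * cosh (nuP b * x) ^ 2 := by
    rw [← rpow_natCast, ← rpow_add (cosh_pos _)]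
    norm_num
  rw [deriv_deriv_cosh_mul_rpow, hpow]
  unfold Htilde0
  field_simp
  unfold nuP
  ring

section Lefton

variable {b A : ℝ}

lemma lefton_amplitude_pos (hb : b < 1) (hA : 0 < A) : 0 < A * (1 - b) / 2 := by
  have : 0 < 1 - b := by linarith
  positivity

lemma Qp_pos (hb : b < 1) (hA : 0 < A) (x : ℝ) : 0 < Qp b A x :=
  mul_pos (lefton_amplitude_pos hb hA) (rpow_pos_of_pos (cosh_pos _) _)

lemma Qp_rpow (hb : b < 1) (hA : 0 < A) (x s : ℝ) :
    Qp b A x ^ s = (A * (1 - b) / 2) ^ s * cosh (nuP b * x) ^ (b / nuP b * s) := by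
  rw [Qp, mul_rpow (lefton_amplitude_pos hb hA).le (rpow_nonneg (cosh_pos _).le _),
    ← rpow_mul (cosh_pos _).le]

lemma kP_mul_rpow (hb : b < 1) (hA : 0 < A) (s : ℝ) :
    kP b A * (A * (1 - b) / 2) ^ s = (A * (1 - b) / 2) ^ (1 / b + 1 + s) := by
  rw [kP, ← rpow_add (lefton_amplitude_pos hb hA)]

lemma sqrt_alphaP (hb : b < 1) (hA : 0 < A) (x : ℝ) :
    √(alphaP b A x) = Qp b A x ^ (-1 / (2 * b) - 1) := by
  rw [alphaP, sqrt_eq_rpow, ← rpow_mul (Qp_pos hb hA x).le]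
  ring_nf

lemma sqrt_alphaP_mul_Qp (hb : b < 1) (hA : 0 < A) (x : ℝ) :
    √(alphaP b A x) * Qp b A x = Qp b A x ^ (-1 / (2 * b)) := by
  rw [sqrt_alphaP hb hA, ← rpow_add_one (Qp_pos hb hA x).ne', sub_add_cancel]

lemma sqrt_alphaP_mul_Qp_rpow (hb : b < 1) (hA : 0 < A) (x : ℝ) :
    √(alphaP b A x) * Qp b A x ^ (1 / b + 2) = Qp b A x ^ (1 / (2 * b) + 1) := by
  rw [sqrt_alphaP hb hA, ← rpow_add (Qp_pos hb hA x)]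
  ring_nf

lemma inv_alphaP (hb : b < 1) (hA : 0 < A) (x : ℝ) :
    (alphaP b A x)⁻¹ = Qp b A x ^ (1 / b + 2) := by
  rw [alphaP, ← rpow_neg (Qp_pos hb hA x).le]
  ring_nf

lemma alphaP_mul_Qp (hb : b < 1) (hA : 0 < A) (hb₀ : b ≠ 0) (hb₁ : b ≠ -1) (x : ℝ) :
    alphaP b A x * Qp b A x = (A * (1 - b) / 2) ^ (-1 / b - 1) * cosh (nuP b * x) ^ 2 := by
  have hexp : b / nuP b * (-1 / b - 1) = 2 := by
    have : b + 1 ≠ 0 := fun h => hb₁ (by linarith)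
    unfold nuP
    field_simp
    ring
  rw [alphaP, ← rpow_add_one (Qp_pos hb hA x).ne', Qp_rpow hb hA, show -1 / b - 2 + 1 = -1 / b - 1
    by ring, hexp, rpow_two]

lemma hasDerivAt_Qp (hb : b ≠ -1) (x : ℝ) :
    HasDerivAt (Qp b A) (b * tanh (nuP b * x) * Qp b A x) x := by
  have hν := nuP_ne_zero hb
  have hc : cosh (nuP b * x) ≠ 0 := (cosh_pos _).ne'
  refine ((hasDerivAt_cosh_mul_rpow _ _ x).const_mul (A * (1 - b) / 2)).congr_deriv ?_
  rw [Qp, tanh_eq_sinh_div_cosh, rpow_sub_one hc]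
  field_simp

lemma Hop_sqrt_alphaP_mul_Qp (hb : b < 1) (hA : 0 < A) (hb₀ : b ≠ 0) (hb₁ : b ≠ -1) (x : ℝ) :
    Hop b A (fun y => √(alphaP b A y) * Qp b A y) x
      = -((1 + b) / b) * Qp b A x ^ (1 / (2 * b) + 1) := by
  have hprofile (y : ℝ) : √(alphaP b A y) * Qp b A y
      = (A * (1 - b) / 2) ^ (-1 / (2 * b)) * cosh (nuP b * y) ^ (-1 / (2 * nuP b)) := by
    rw [sqrt_alphaP_mul_Qp hb hA, Qp_rpow hb hA]
    field_simp
  have hexp : b / nuP b * (1 / (2 * b) + 1) = -1 / (2 * nuP b) - 2 := by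
    have : b + 1 ≠ 0 := fun h => hb₁ (by linarith)
    unfold nuP
    field_simp
    ring
  rw [Qp_rpow hb hA, hexp, show 1 / (2 * b) + 1 = 1 / b + 1 + -1 / (2 * b) by ring,
    ← kP_mul_rpow hb hA]
  calc Hop b A (fun y => √(alphaP b A y) * Qp b A y) x
      = 2 * kP b A / b ^ 2 * (A * (1 - b) / 2) ^ (-1 / (2 * b))
          * (-deriv (deriv fun y => cosh (nuP b * y) ^ (-1 / (2 * nuP b))) x
            + Htilde0 b x * cosh (nuP b * x) ^ (-1 / (2 * nuP b))) := by
        simp only [Hop, hprofile, deriv_const_mul_field']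
        ring
    _ = 2 * kP b A / b ^ 2 * (A * (1 - b) / 2) ^ (-1 / (2 * b))
          * (-(b * (1 + b) / 2) * cosh (nuP b * x) ^ (-1 / (2 * nuP b) - 2)) := by
        rw [neg_deriv_deriv_add_Htilde0_mul_cosh_rpow hb₁]
    _ = _ := by field_simp

lemma Lop_Qp (hb : b < 1) (hA : 0 < A) (hb₀ : b ≠ 0) (hb₁ : b ≠ -1) (x : ℝ) :
    Lop b A (Qp b A) x = -((1 + b) / b) := by
  set C := (A * (1 - b) / 2) ^ (-1 / b - 1)
  have hαQ (y : ℝ) : alphaP b A y * Qp b A y = C * cosh (nuP b * y) ^ 2 :=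
    alphaP_mul_Qp hb hA hb₀ hb₁ y
  have hflux : (fun y => 2 * alphaP b A y / b ^ 2 * deriv (Qp b A) y)
      = fun y => C / b * sinh (2 * nuP b * y) := by
    funext y
    have hQ' : 2 * alphaP b A y / b ^ 2 * (b * tanh (nuP b * y) * Qp b A y)
        = 2 / b * tanh (nuP b * y) * (alphaP b A y * Qp b A y) := by field_simp
    rw [(hasDerivAt_Qp hb₁ y).deriv, hQ', hαQ, tanh_eq_sinh_div_cosh, mul_assoc 2, sinh_two_mul]
    field_simp [(cosh_pos (nuP b * y)).ne']
  have hsinh : HasDerivAt (fun y => C / b * sinh (2 * nuP b * y))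
      (C / b * (cosh (2 * nuP b * x) * (2 * nuP b))) x := by
    simpa using (((hasDerivAt_id x).const_mul (2 * nuP b)).sinh).const_mul (C / b)
  have hkC : kP b A * C = 1 := by
    rw [kP_mul_rpow hb hA, show 1 / b + 1 + (-1 / b - 1) = 0 by ring, rpow_zero]
  rw [Lop, hflux, hsinh.deriv, mul_assoc _ (alphaP b A x), hαQ, mul_assoc 2, cosh_two_mul]
  have hsq := cosh_sq_sub_sinh_sq (nuP b * x)
  clear_value C
  generalize cosh (nuP b * x) = c at *
  generalize sinh (nuP b * x) = s at *
  unfold nuP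
  field_simp
  linear_combination -(b + 1) * hkC - (b + 1) * kP b A * C * hsq

end Lefton

/-- **Action of `H` on `√α·Q`** (Lemma 1.1(4)): `H(√α Q) = −((1+b)/b) √α Q^{1/b+2}
 = −((1+b)/b) √α α⁻¹`; equivalently `𝓛Q` is the constant `−(1+b)/b`. -/
theorem H_on_sqrtAlpha_Q (b A : ℝ) (hb : b < -1) (hA : 0 < A) :
    (∀ x : ℝ,
      Hop b A (fun y => Real.sqrt (alphaP b A y) * Qp b A y) x
        = -((1 + b) / b) * Real.sqrt (alphaP b A x) * Qp b A x ^ (1 / b + 2)) ∧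
    (∀ x : ℝ,
      Hop b A (fun y => Real.sqrt (alphaP b A y) * Qp b A y) x
        = -((1 + b) / b) * Real.sqrt (alphaP b A x) * (alphaP b A x)⁻¹) ∧
    ∀ x : ℝ, Lop b A (Qp b A) x = -((1 + b) / b) := by
  have hb' : b < 1 := by linarith
  have hb₀ : b ≠ 0 := by linarith
  have hb₁ : b ≠ -1 := by linarith
  have hHop (x : ℝ) :
      Hop b A (fun y => √(alphaP b A y) * Qp b A y) x
        = -((1 + b) / b) * √(alphaP b A x) * Qp b A x ^ (1 / b + 2) := by
    rw [mul_assoc, sqrt_alphaP_mul_Qp_rpow hb' hA, Hop_sqrt_alphaP_mul_Qp hb' hA hb₀ hb₁]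
  refine ⟨hHop, fun x => ?_, Lop_Qp hb' hA hb₀ hb₁⟩
  rw [hHop, inv_alphaP hb' hA]
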